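/- arXiv:1409.1169 — 8 statements merged into one kernel-verified Lean document; each statement's English description precedes it below -/
import Mathlib

section
/- Let R be an F-finite Noetherian commutative ring of prime characteristic p. Then (a) the set of prime ideals P of R such that the localization R_P is Frobenius split is open in the Zariski topology on Spec R, and (b) R is Frobenius split if and only if R_P is Frobenius split for every maximal ideal P of R. -/
/-- A commutative ring `R` of characteristic `p` is Frobenius split if there is an
additive map `φ : R → R` that is `p⁻¹`-linear (`φ (r^p * x) = r * φ x`) and sends `1` to `1`. -/
def FrobeniusSplit (p : ℕ) (R : Type*) [CommRing R] : Prop :=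
  ∃ φ : R →+ R, (∀ r x : R, φ (r ^ p * x) = r * φ x) ∧ φ 1 = 1

lemma pow_pred_mul {B : Type*} [CommRing B] {q : ℕ} (hq : q - 1 + 1 = q) (b z : B) :
    b ^ q * z = b ^ (q - 1) * (b * z) := by
  conv_lhs => rw [← hq]
  rw [pow_succ, mul_assoc]

section FStar

variable (p : ℕ) [Fact p.Prime]

/-- Type synonym: `A` viewed as a module over `R` via Frobenius (composed with the
algebra map). -/
def FStar (_p : ℕ) (A : Type*) := A

/-- The identity map `A → FStar p A`. -/
def FStar.mk {p : ℕ} {A : Type*} : A → FStar p A := id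

/-- The identity map `FStar p A → A`. -/
def FStar.un {p : ℕ} {A : Type*} : FStar p A → A := id

instance (A : Type*) [CommRing A] : AddCommGroup (FStar p A) :=
  inferInstanceAs (AddCommGroup A)

instance (A : Type*) [CommRing A] : One (FStar p A) := ⟨FStar.mk (1 : A)⟩

noncomputable instance fstarModule (R A : Type*) [CommRing R] [CommRing A] [Algebra R A]
    [CharP A p] : Module R (FStar p A) :=
  Module.compHom A ((frobenius A p).comp (algebraMap R A))

lemma fstar_smul {p : ℕ} [Fact p.Prime] {R A : Type*} [CommRing R] [CommRing A] [Algebra R A]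
    [CharP A p] (r : R) (x : FStar p A) :
    r • x = FStar.mk ((algebraMap R A r) ^ p * FStar.un x) := rfl

lemma fstar_one_def {p : ℕ} {A : Type*} [CommRing A] :
    (1 : FStar p A) = FStar.mk (1 : A) := rfl

instance (R A : Type*) [CommRing R] [CommRing A] [Algebra R A] [CharP A p] :
    IsScalarTower R A (FStar p A) := by
  constructor
  intro r a x
  rw [fstar_smul, fstar_smul, fstar_smul]
  show FStar.mk ((algebraMap A A (r • a)) ^ p * FStar.un x)
      = FStar.mk ((algebraMap R A r) ^ p * ((algebraMap A A a) ^ p * FStar.un x))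
  simp only [Algebra.algebraMap_self_apply, Algebra.smul_def, mul_pow, mul_assoc]

lemma frobeniusSplit_iff_linear (A : Type*) [CommRing A] [CharP A p] :
    FrobeniusSplit p A ↔ ∃ f : FStar p A →ₗ[A] A, f 1 = 1 := by
  constructor
  · rintro ⟨φ, hφ, h1⟩
    refine ⟨⟨⟨fun x => φ (FStar.un x), fun x y => φ.map_add _ _⟩, fun r x => ?_⟩, h1⟩
    show φ ((algebraMap A A r) ^ p * FStar.un x) = r * φ (FStar.un x)
    simpa using hφ r (FStar.un x)
  · rintro ⟨f, hf⟩
    refine ⟨AddMonoidHom.mk' (fun x => f (FStar.mk x)) (fun x y => f.map_add _ _),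
      fun r x => ?_, hf⟩
    have := f.map_smul r (FStar.mk x)
    rw [fstar_smul] at this
    show f (FStar.mk ((algebraMap A A r) ^ p * x)) = r * f (FStar.mk x)
    exact this

lemma frobeniusSplit_iff_isUnit (A : Type*) [CommRing A] [CharP A p] :
    FrobeniusSplit p A ↔ ∃ f : FStar p A →ₗ[A] A, IsUnit (f 1) := by
  rw [frobeniusSplit_iff_linear]
  constructor
  · rintro ⟨f, hf⟩; exact ⟨f, by rw [hf]; exact isUnit_one⟩
  · rintro ⟨f, ⟨u, hu⟩⟩
    refine ⟨((u⁻¹ : Aˣ) : A) • f, ?_⟩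
    show ((u⁻¹ : Aˣ) : A) • f 1 = 1
    rw [← hu, smul_eq_mul, Units.inv_mul]

variable (R : Type*) [CommRing R] [CharP R p]

/-- Evaluation at `1` of `p⁻¹`-linear maps, as a linear map. -/
noncomputable def evalOne : (FStar p R →ₗ[R] R) →ₗ[R] R where
  toFun f := f 1
  map_add' _ _ := rfl
  map_smul' _ _ := rfl

instance charP_localizationAtPrime (P : Ideal R) [P.IsPrime] :
    CharP (Localization.AtPrime P) p := by
  have h : (p : Localization.AtPrime P) = 0 := by
    rw [← map_natCast (algebraMap R (Localization.AtPrime P)) p, CharP.cast_eq_zero R p,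
      map_zero]
  exact (CharP.charP_iff_prime_eq_zero (Fact.out : p.Prime)).mpr h

set_option maxHeartbeats 1000000 in
/-- The localization map as a linear map `FStar p R →ₗ[R] FStar p R_P`. -/
noncomputable def ellMap (P : Ideal R) [P.IsPrime] :
    FStar p R →ₗ[R] FStar p (Localization.AtPrime P) where
  toFun x := FStar.mk (algebraMap R (Localization.AtPrime P) (FStar.un x))
  map_add' x y := congrArg FStar.mk (map_add _ (FStar.un x) (FStar.un y))
  map_smul' r x := by
    rw [fstar_smul, fstar_smul]
    show FStar.mk (algebraMap R (Localization.AtPrime P) ((algebraMap R R r) ^ p * FStar.un x))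
        = FStar.mk ((algebraMap R (Localization.AtPrime P) r) ^ p
            * algebraMap R (Localization.AtPrime P) (FStar.un x))
    simp [map_mul, map_pow]

set_option maxHeartbeats 1000000 in
instance isLocalizedModule_ellMap (P : Ideal R) [P.IsPrime] :
    IsLocalizedModule P.primeCompl (ellMap p R P) := by
  set A := Localization.AtPrime P with hA
  have hp1 : p - 1 + 1 = p := Nat.succ_pred_eq_of_pos (Fact.out : p.Prime).pos
  constructor
  · intro s
    rw [Module.End.isUnit_iff]
    obtain ⟨u, hu⟩ := (IsLocalization.map_units A s).pow p
    constructor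
    · intro x y hxy
      simp only [Module.algebraMap_end_apply, fstar_smul] at hxy
      have hxy' : (algebraMap R A (s : R)) ^ p * (FStar.un x)
          = (algebraMap R A (s : R)) ^ p * (FStar.un y) := congrArg FStar.un hxy
      have h2 : FStar.un x = FStar.un y := by
        have := congrArg (fun z => ((u⁻¹ : Aˣ) : A) * z) hxy'
        simpa [← hu, ← mul_assoc, Units.inv_mul] using this
      exact h2
    · intro y
      refine ⟨FStar.mk (((u⁻¹ : Aˣ) : A) * FStar.un y), ?_⟩
      simp only [Module.algebraMap_end_apply, fstar_smul]
      show FStar.mk ((algebraMap R A (s : R)) ^ p * (((u⁻¹ : Aˣ) : A) * FStar.un y))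
          = FStar.mk (FStar.un y)
      rw [← hu, ← mul_assoc, Units.mul_inv, one_mul]
  · intro y
    obtain ⟨⟨a, t⟩, h⟩ := IsLocalization.surj P.primeCompl (FStar.un y : A)
    refine ⟨(FStar.mk ((t : R) ^ (p - 1) * a), t), ?_⟩
    show FStar.mk ((algebraMap R A (t : R)) ^ p * FStar.un y)
        = FStar.mk (algebraMap R A ((t : R) ^ (p - 1) * a))
    refine congrArg FStar.mk ?_
    rw [pow_pred_mul hp1, mul_comm (algebraMap R A (t : R)) (FStar.un y), h,
      map_mul, map_pow]
  · intro x y hxy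
    have hxy' : algebraMap R A (FStar.un x) = algebraMap R A (FStar.un y) :=
      congrArg FStar.un hxy
    obtain ⟨c, hc⟩ := (IsLocalization.eq_iff_exists P.primeCompl A).mp hxy'
    refine ⟨c, ?_⟩
    show FStar.mk ((algebraMap R R (c : R)) ^ p * FStar.un x)
        = FStar.mk ((algebraMap R R (c : R)) ^ p * FStar.un y)
    refine congrArg FStar.mk ?_
    simp only [Algebra.algebraMap_self_apply]
    rw [pow_pred_mul hp1 _ (FStar.un x), pow_pred_mul hp1 _ (FStar.un y), hc]

set_option maxHeartbeats 1000000 in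
/-- The key local statement: `R_P` is Frobenius split iff the ideal of values
`φ 1` (over all `p⁻¹`-linear `φ`) is not contained in `P`. -/
theorem frobeniusSplit_localization_iff [Module.Finite R (FStar p R)] [IsNoetherianRing R]
    (P : Ideal R) [P.IsPrime] :
    FrobeniusSplit p (Localization.AtPrime P) ↔ ¬ (LinearMap.range (evalOne p R) ≤ P) := by
  haveI : Module.FinitePresentation R (FStar p R) :=
    Module.finitePresentation_of_finite R (FStar p R)
  have hone : (1 : FStar p (Localization.AtPrime P)) = ellMap p R P (1 : FStar p R) := by
    refine congrArg FStar.mk ?_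
    exact (map_one (algebraMap R (Localization.AtPrime P))).symm
  have key : ∀ φ : FStar p R →ₗ[R] R,
      (IsLocalizedModule.mapExtendScalars P.primeCompl (ellMap p R P)
          (Algebra.linearMap R (Localization.AtPrime P)) (Localization.AtPrime P) φ)
          (1 : FStar p (Localization.AtPrime P))
        = algebraMap R (Localization.AtPrime P) (φ 1) := by
    intro φ
    rw [hone]
    show (IsLocalizedModule.map P.primeCompl (ellMap p R P)
        (Algebra.linearMap R (Localization.AtPrime P)) φ) (ellMap p R P 1)
        = algebraMap R (Localization.AtPrime P) (φ 1)
    rw [IsLocalizedModule.map_apply]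
    rfl
  constructor
  · rw [frobeniusSplit_iff_linear]
    rintro ⟨g, hg⟩ hle
    obtain ⟨⟨φ, s⟩, hφ⟩ :=
      IsLocalizedModule.surj P.primeCompl (IsLocalizedModule.mapExtendScalars P.primeCompl
        (ellMap p R P) (Algebra.linearMap R (Localization.AtPrime P))
        (Localization.AtPrime P)) g
    have hev := DFunLike.congr_fun hφ (1 : FStar p (Localization.AtPrime P))
    have h1 : ((φ, s).2 • g) (1 : FStar p (Localization.AtPrime P))
        = algebraMap R (Localization.AtPrime P) (s : R) := by
      show (s : R) • g 1 = algebraMap R (Localization.AtPrime P) (s : R)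
      rw [hg, Algebra.smul_def, mul_one]
    rw [h1, key φ] at hev
    obtain ⟨c, hc⟩ :=
      (IsLocalization.eq_iff_exists P.primeCompl (Localization.AtPrime P)).mp hev.symm
    have hmem : (c : R) * φ 1 ∈ LinearMap.range (evalOne p R) := ⟨(c : R) • φ, rfl⟩
    have hP : (c : R) * φ 1 ∈ P := hle hmem
    rw [hc] at hP
    rcases Ideal.IsPrime.mem_or_mem inferInstance hP with h | h
    · exact c.2 h
    · exact s.2 h
  · intro hle
    rw [SetLike.le_def] at hle
    push_neg at hle
    obtain ⟨r, hrI, hrP⟩ := hle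
    obtain ⟨φ, hφ⟩ := hrI
    rw [frobeniusSplit_iff_isUnit]
    refine ⟨IsLocalizedModule.mapExtendScalars P.primeCompl (ellMap p R P)
      (Algebra.linearMap R (Localization.AtPrime P)) (Localization.AtPrime P) φ, ?_⟩
    rw [key φ]
    have : φ (1 : FStar p R) = r := hφ
    rw [this]
    exact IsLocalization.map_units (Localization.AtPrime P) (⟨r, hrP⟩ : P.primeCompl)

end FStar

/-- For an F-finite Noetherian ring `R` of prime characteristic `p`:
(a) the locus of primes `P` such that `R_P` is Frobenius split is Zariski open, and
(b) `R` is Frobenius split iff `R_P` is Frobenius split for every maximal ideal `P`. -/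
theorem frobeniusSplit_open_locus_and_local_global (p : ℕ) [Fact p.Prime]
    (R : Type*) [CommRing R] [IsNoetherianRing R] [CharP R p]
    (hFfinite : (frobenius R p).Finite) :
    IsOpen {P : PrimeSpectrum R | FrobeniusSplit p (Localization.AtPrime P.asIdeal)} ∧
    (FrobeniusSplit p R ↔
      ∀ (P : Ideal R) (_ : P.IsMaximal), FrobeniusSplit p (Localization.AtPrime P)) := by
  haveI hfin : Module.Finite R (FStar p R) := hFfinite
  set I : Ideal R := LinearMap.range (evalOne p R) with hI
  constructor
  · have hset : {P : PrimeSpectrum R | FrobeniusSplit p (Localization.AtPrime P.asIdeal)}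
        = (PrimeSpectrum.zeroLocus (I : Set R))ᶜ := by
      ext P
      simp only [Set.mem_setOf_eq, Set.mem_compl_iff, PrimeSpectrum.mem_zeroLocus]
      rw [frobeniusSplit_localization_iff p R P.asIdeal]
      rfl
    rw [hset]
    exact (PrimeSpectrum.isClosed_zeroLocus _).isOpen_compl
  · constructor
    · intro hsplit P hP
      haveI := hP.isPrime
      rw [frobeniusSplit_localization_iff p R P]
      intro hle
      rw [frobeniusSplit_iff_linear] at hsplit
      obtain ⟨f, hf⟩ := hsplit
      have : (1 : R) ∈ I := ⟨f, hf⟩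
      exact hP.ne_top (Ideal.eq_top_of_isUnit_mem P (hle this) isUnit_one)
    · intro hloc
      rw [frobeniusSplit_iff_linear]
      by_contra hsplit
      have hne : I ≠ ⊤ := by
        intro h
        have : (1 : R) ∈ I := h ▸ Submodule.mem_top
        obtain ⟨f, hf⟩ := this
        exact hsplit ⟨f, hf⟩
      obtain ⟨P, hP, hle⟩ := Ideal.exists_le_maximal I hne
      haveI := hP.isPrime
      have := hloc P hP
      rw [frobeniusSplit_localization_iff p R P] at this
      exact this hle
end

section
/- Let R ⊆ S be an inclusion of F-finite domains of prime characteristic p that splits in the category of R-modules (i.e., there is an R-linear map ψ : S → R with ψ(1) = 1). If S is strongly F-regular, then R is strongly F-regular. -/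
/-- A domain `R` of characteristic `p` is strongly F-regular if for every nonzero `f ∈ R`
there are `e ≥ 1` and a `p^{-e}`-linear map `φ : R → R` (i.e. an additive map with
`φ (r^{p^e} * x) = r * φ x`) such that `φ f = 1`. -/
def StronglyFRegular (p : ℕ) (R : Type*) [CommRing R] : Prop :=
  ∀ f : R, f ≠ 0 → ∃ e : ℕ, 1 ≤ e ∧
    ∃ φ : R →+ R, (∀ r x : R, φ (r ^ p ^ e * x) = r * φ x) ∧ φ f = 1

/-- If `R ⊆ S` is an inclusion of F-finite domains of prime characteristic `p` that splits
as a map of `R`-modules, and `S` is strongly F-regular, then so is `R`. -/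
theorem stronglyFRegular_of_splitInclusion (p : ℕ) [Fact p.Prime]
    (R S : Type*) [CommRing R] [IsDomain R] [CommRing S] [IsDomain S]
    [CharP R p] [CharP S p]
    (hRF : (frobenius R p).Finite) (hSF : (frobenius S p).Finite)
    (ι : R →+* S) (hι : Function.Injective ι)
    (ψ : S →+ R) (hψlin : ∀ (r : R) (s : S), ψ (ι r * s) = r * ψ s) (hψ1 : ψ 1 = 1)
    (hS : StronglyFRegular p S) :
    StronglyFRegular p R := by
  intro f hf
  obtain ⟨e, he, φ, hφ, hφf⟩ := hS (ι f) (fun h => hf (hι (by simpa using h)))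
  refine ⟨e, he, (ψ.comp φ).comp ι.toAddMonoidHom, fun r x => ?_, ?_⟩
  · show ψ (φ (ι (r ^ p ^ e * x))) = r * ψ (φ (ι x))
    rw [map_mul, map_pow, hφ, hψlin]
  · show ψ (φ (ι f)) = 1
    rw [hφf, hψ1]
end

section
/- Let R be an F-finite Noetherian strongly F-regular domain of prime characteristic p. Then R is normal, i.e., R is integrally closed in its field of fractions: every element of the fraction field of R that is integral over R lies in R. -/
/-- An F-finite Noetherian strongly F-regular domain of prime characteristic `p` is normal,
i.e. integrally closed in its field of fractions. -/
theorem isIntegrallyClosed_of_stronglyFRegular (p : ℕ) [Fact p.Prime]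
    (R : Type*) [CommRing R] [IsDomain R] [IsNoetherianRing R] [CharP R p]
    (hFfinite : (frobenius R p).Finite) (hSFR : StronglyFRegular p R) :
    IsIntegrallyClosed R := by
  refine (isIntegrallyClosed_iff (FractionRing R)).mpr ?_
  intro x hx
  -- common denominator `c` for the finitely generated module `R[x]`
  obtain ⟨c, hcmem, hc⟩ :=
    FractionalIdeal.isFractional_of_fg (S := nonZeroDivisors R) (P := FractionRing R) hx.fg_adjoin_singleton
  have hc0 : c ≠ 0 := nonZeroDivisors.ne_zero hcmem
  obtain ⟨e, _he, φ, hφ, hφc⟩ := hSFR c hc0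
  -- `x ^ p ^ e ∈ R[x]`, so `c • x ^ p ^ e` is integral
  have hxmem : x ^ p ^ e ∈ Algebra.adjoin R {x} :=
    pow_mem (Algebra.self_mem_adjoin_singleton R x) _
  obtain ⟨r, hr⟩ := hc _ hxmem
  -- write `x = a / b`
  obtain ⟨⟨a, b⟩, hab⟩ := IsLocalization.mk'_surjective (nonZeroDivisors R) x
  have hbspec : x * algebraMap R (FractionRing R) b = algebraMap R (FractionRing R) a := by
    rw [← hab]; exact IsLocalization.mk'_spec (FractionRing R) a b
  have hb0 : (algebraMap R (FractionRing R)) (b : R) ≠ 0 :=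
    IsFractionRing.to_map_ne_zero_of_mem_nonZeroDivisors b.2
  -- clear denominators in `hr`
  have key : (b : R) ^ p ^ e * r = a ^ p ^ e * c := by
    apply IsFractionRing.injective R (FractionRing R)
    have : (algebraMap R (FractionRing R)) r * (algebraMap R (FractionRing R)) ((b : R) ^ p ^ e)
        = (algebraMap R (FractionRing R)) c * ((x * algebraMap R (FractionRing R) b) ^ p ^ e) := by
      rw [mul_pow, map_pow]
      rw [hr]
      rw [Algebra.smul_def]
      ring
    rw [hbspec] at this
    simp only [map_mul, map_pow] at this ⊢
    rw [mul_comm ((algebraMap R (FractionRing R)) (b : R) ^ p ^ e)]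
    rw [this]; ring
  -- apply `φ`
  have ha : a = (b : R) * φ r := by
    have h1 : φ ((b : R) ^ p ^ e * r) = (b : R) * φ r := hφ _ _
    have h2 : φ (a ^ p ^ e * c) = a * φ c := hφ _ _
    rw [key, h2, hφc, mul_one] at h1
    exact h1
  refine ⟨φ r, ?_⟩
  have : algebraMap R (FractionRing R) (φ r) * algebraMap R (FractionRing R) b = x * algebraMap R (FractionRing R) b := by
    rw [hbspec, ha, map_mul]; ring
  exact mul_right_cancel₀ hb0 this
end

section
/- Let R be a Noetherian commutative ring of prime characteristic p, fix an integer e ≥ 1 and a p^{-e}-linear map φ on R, and let J be a φ-compatible ideal of R. Then every prime ideal of R that is minimal over J is φ-compatible. -/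
/-- An ideal `J` is `φ`-compatible for an additive map `φ : R → R` if `φ J ⊆ J`. -/
def PhiCompatible {R : Type*} [CommRing R] (φ : R →+ R) (J : Ideal R) : Prop :=
  ∀ x ∈ J, φ x ∈ J

section Aux

variable {R : Type*} [CommRing R]

/-- If `P` is a minimal prime over `J` and `x ∈ P`, then some multiple `s * x ^ n`
with `s ∉ P` lies in `J`. -/
lemma aux_exists_mul_pow_mem (J P : Ideal R) (hP : P ∈ J.minimalPrimes)
    {x : R} (hx : x ∈ P) : ∃ (n : ℕ) (s : R), s ∉ P ∧ s * x ^ n ∈ J := by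
  have hPp : P.IsPrime := hP.1.1
  by_contra h
  push_neg at h
  set T : Submonoid R :=
    { carrier := {y | ∃ s n, s ∉ P ∧ y = s * x ^ n}
      one_mem' := ⟨1, 0, fun h1 => hPp.ne_top (P.eq_top_iff_one.mpr h1), by ring⟩
      mul_mem' := by
        rintro a b ⟨s, n, hs, rfl⟩ ⟨t, m, ht, rfl⟩
        refine ⟨s * t, n + m, fun hst => ?_, by ring⟩
        rcases hPp.mem_or_mem hst with h' | h' <;> [exact hs h'; exact ht h'] } with hT
  have hdisj : Disjoint (J : Set R) (T : Set R) := by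
    rw [Set.disjoint_left]
    rintro y hyJ ⟨s, n, hs, rfl⟩
    exact h n s hs hyJ
  obtain ⟨Q, hQp, hJQ, hQd⟩ := Ideal.exists_le_prime_disjoint J T hdisj
  have hQP : Q ≤ P := by
    intro y hy
    by_contra hyP
    exact Set.disjoint_left.mp hQd hy ⟨y, 0, hyP, by ring⟩
  have hPQ : P ≤ Q := hP.2 ⟨hQp, hJQ⟩ hQP
  refine Set.disjoint_left.mp hQd (hPQ hx)
    ⟨1, 1, fun h1 => hPp.ne_top (P.eq_top_iff_one.mpr h1), by ring⟩

/-- iterates of a `q⁻¹`-linear map are `q⁻ᵏ`-linear -/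
lemma aux_iterate_linear (φ : R →+ R) (q : ℕ)
    (hφ : ∀ r x : R, φ (r ^ q * x) = r * φ x) :
    ∀ (k : ℕ) (r x : R), φ^[k] (r ^ q ^ k * x) = r * φ^[k] x := by
  intro k
  induction k with
  | zero => intro r x; simp
  | succ k ih =>
    intro r x
    rw [Function.iterate_succ_apply, Function.iterate_succ_apply]
    have : r ^ q ^ (k + 1) * x = (r ^ q ^ k) ^ q * x := by
      rw [← pow_mul, mul_comm (q ^ k) q, pow_succ']
    rw [this, hφ, ih]

lemma aux_iterate_compat (φ : R →+ R) (J : Ideal R) (hJ : PhiCompatible φ J) :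
    ∀ (k : ℕ) (x : R), x ∈ J → φ^[k] x ∈ J := by
  intro k
  induction k with
  | zero => intro x hx; simpa using hx
  | succ k ih =>
    intro x hx
    rw [Function.iterate_succ_apply]
    exact ih _ (hJ x hx)

/-- The key iteration identity. -/
lemma aux_key (φ : R →+ R) (q : ℕ) (hq : 1 ≤ q)
    (hφ : ∀ r x : R, φ (r ^ q * x) = r * φ x) (x : R) :
    ∀ k : ℕ, 1 ≤ k → ∃ (α t β : ℕ), k ≤ t ∧
      φ^[k] ((φ x) ^ α * x ^ t) = (φ x) ^ β := by
  set b := φ x with hb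
  intro k hk
  induction k with
  | zero => omega
  | succ k ih =>
    rcases Nat.eq_or_lt_of_le hk with h1 | h1
    · -- base case k + 1 = 1, i.e. k = 0
      have hk0 : k = 0 := by omega
      subst hk0
      refine ⟨(q - 1) * q, 1, q, le_refl 1, ?_⟩
      rw [Function.iterate_one, pow_mul, pow_one, hφ, ← hb, ← pow_succ,
        Nat.sub_add_cancel hq]
    · -- inductive step with k ≥ 1
      obtain ⟨α, t, β, ht, hiter⟩ := ih (by omega)
      refine ⟨(α + q ^ k - 1) * q, t * q + 1, β + 1, ?_, ?_⟩
      · have : 1 ≤ q ^ k := Nat.one_le_pow _ _ (by omega)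
        nlinarith
      · have hqk1 : 1 ≤ q ^ k := Nat.one_le_pow _ _ (by omega)
        have e1 : b ^ ((α + q ^ k - 1) * q) * x ^ (t * q + 1)
            = (b ^ (α + q ^ k - 1) * x ^ t) ^ q * x := by
          rw [mul_pow, ← pow_mul, ← pow_mul]; ring
        rw [Function.iterate_succ_apply, e1, hφ, ← hb]
        have e2 : b ^ (α + q ^ k - 1) * x ^ t * b = b ^ q ^ k * (b ^ α * x ^ t) := by
          rw [mul_right_comm, ← pow_succ, Nat.sub_add_cancel (by omega : 1 ≤ α + q ^ k),
            pow_add]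
          ring
        rw [e2, aux_iterate_linear φ q hφ k b _, hiter, ← pow_succ']

end Aux

/-- If `J` is an ideal of a Noetherian ring `R` of characteristic `p` compatible with a
`p^{-e}`-linear map `φ`, then every minimal prime of `J` is `φ`-compatible. -/
theorem phiCompatible_minimalPrimes (p : ℕ) [Fact p.Prime]
    (R : Type*) [CommRing R] [IsNoetherianRing R] [CharP R p]
    (e : ℕ) (he : 1 ≤ e) (φ : R →+ R) (hφ : ∀ r x : R, φ (r ^ p ^ e * x) = r * φ x)
    (J : Ideal R) (hJ : PhiCompatible φ J)
    (P : Ideal R) (hP : P ∈ J.minimalPrimes) :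
    PhiCompatible φ P := by
  have hPp : P.IsPrime := hP.1.1
  have hJP : J ≤ P := hP.1.2
  set q : ℕ := p ^ e with hqdef
  have hq : 1 ≤ q := Nat.one_le_pow _ _ (Fact.out (p := p.Prime)).pos
  intro x hx
  set b := φ x with hb
  -- Step 1: the saturation of J at P
  set K : Ideal R :=
    { carrier := {y | ∃ s, s ∉ P ∧ s * y ∈ J}
      add_mem' := by
        rintro a c ⟨s, hs, hsa⟩ ⟨t, ht, htc⟩
        refine ⟨s * t, fun hst => ?_, ?_⟩
        · rcases hPp.mem_or_mem hst with h' | h' <;> [exact hs h'; exact ht h']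
        · have : s * t * (a + c) = t * (s * a) + s * (t * c) := by ring
          rw [this]
          exact J.add_mem (J.mul_mem_left _ hsa) (J.mul_mem_left _ htc)
      zero_mem' := ⟨1, fun h1 => hPp.ne_top (P.eq_top_iff_one.mpr h1), by simp⟩
      smul_mem' := by
        rintro r a ⟨s, hs, hsa⟩
        refine ⟨s, hs, ?_⟩
        have : s * (r • a) = r * (s * a) := by simp [smul_eq_mul]; ring
        rw [this]
        exact J.mul_mem_left _ hsa } with hK
  have hPK : P ≤ K.radical := by
    intro y hy
    obtain ⟨n, s, hs, hsn⟩ := aux_exists_mul_pow_mem J P hP hy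
    exact ⟨n, s, hs, hsn⟩
  obtain ⟨n, hn⟩ := Ideal.exists_pow_le_of_le_radical_of_fg hPK
    ((isNoetherian_def.mp inferInstance) P)
  -- Step 2: a single s with s * P ^ m ⊆ J
  set m : ℕ := n + 1 with hm
  have hnm : P ^ m ≤ K := le_trans (Ideal.pow_le_pow_right (Nat.le_succ n)) hn
  obtain ⟨s, hs, hsJ⟩ : ∃ s, s ∉ P ∧ ∀ y ∈ P ^ m, s * y ∈ J := by
    obtain ⟨T, hT⟩ := (isNoetherian_def.mp inferInstance) (P ^ m)
    classical
    have hTK : ∀ t ∈ T, ∃ s, s ∉ P ∧ s * t ∈ J := by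
      intro t htT
      exact hnm (hT ▸ Ideal.subset_span htT)
    choose! g hg1 hg2 using hTK
    refine ⟨∏ t ∈ T, g t, fun hprod => ?_, fun y hy => ?_⟩
    · haveI := hPp
      obtain ⟨t, htT, hgt⟩ := Ideal.IsPrime.prod_mem_iff.mp hprod
      exact hg1 t htT hgt
    · -- show y ∈ the colon-type ideal
      rw [← hT] at hy
      refine Submodule.span_induction ?_ (by simp) ?_ ?_ hy
      · intro t htT
        rw [← Finset.mul_prod_erase T g htT]
        have he : g t * (∏ u ∈ T.erase t, g u) * t
            = (∏ u ∈ T.erase t, g u) * (g t * t) := by ring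
        rw [he]
        exact J.mul_mem_left _ (hg2 t htT)
      · intro a c _ _ ha hc
        rw [mul_add]; exact J.add_mem ha hc
      · intro r a _ ha
        have : (∏ t ∈ T, g t) * (r • a) = r * ((∏ t ∈ T, g t) * a) := by
          simp [smul_eq_mul]; ring
        rw [this]; exact J.mul_mem_left _ ha
  -- Step 3: the iteration identity
  obtain ⟨α, t, β, htm, hiter⟩ := aux_key φ q hq hφ x m (Nat.succ_le_succ (Nat.zero_le n))
  -- Step 4: conclude
  have hxt : b ^ α * x ^ t ∈ P ^ m := by
    have : x ^ t = x ^ m * x ^ (t - m) := by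
      rw [← pow_add, Nat.add_sub_cancel' htm]
    rw [this]
    exact Ideal.mul_mem_left _ _ (Ideal.mul_mem_right _ _ (Ideal.pow_mem_pow hx m))
  have hsmem : s * (b ^ α * x ^ t) ∈ J := hsJ _ hxt
  have hsq : s ^ q ^ m * (b ^ α * x ^ t) ∈ J := by
    have h1 : 1 ≤ q ^ m := Nat.one_le_pow _ _ (by omega)
    have h2 : s ^ (q ^ m - 1) * (s * (b ^ α * x ^ t))
        = s ^ q ^ m * (b ^ α * x ^ t) := by
      rw [← mul_assoc, ← pow_succ, Nat.sub_add_cancel h1]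
    rw [← h2]
    exact J.mul_mem_left _ hsmem
  have hfinal : s * b ^ β ∈ J := by
    have := aux_iterate_compat φ J hJ m _ hsq
    rwa [aux_iterate_linear φ q hφ m s _, hiter] at this
  rcases hPp.mem_or_mem (hJP hfinal) with h' | h'
  · exact absurd h' hs
  · exact hPp.mem_of_pow_mem _ h'
end

section
/- Let R be a commutative ring of prime characteristic p, fix an integer e ≥ 1, and let φ be a p^{-e}-linear map on R with φ(1) = 1 (i.e., φ is a splitting of the e-th iterated Frobenius). Then every φ-compatible ideal J of R is a radical ideal. -/
/-- If `φ` is a `p^{-e}`-linear map with `φ 1 = 1` (a splitting of the `e`-th iterated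
Frobenius) on a ring of characteristic `p`, then every `φ`-compatible ideal is radical. -/
theorem phiCompatible_isRadical_of_splitting (p : ℕ) [Fact p.Prime]
    (R : Type*) [CommRing R] [CharP R p]
    (e : ℕ) (he : 1 ≤ e) (φ : R →+ R) (hφ : ∀ r x : R, φ (r ^ p ^ e * x) = r * φ x)
    (hφ1 : φ 1 = 1)
    (J : Ideal R) (hJ : PhiCompatible φ J) :
    J.IsRadical := by
  have key : ∀ (m : ℕ) (x : R), x ^ p ^ (e * m) ∈ J → x ∈ J := by
    intro m
    induction m with
    | zero => intro x hx; simpa using hx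
    | succ m ih =>
      intro x hx
      apply ih
      have h1 : x ^ p ^ (e * (m + 1)) = (x ^ p ^ (e * m)) ^ p ^ e * 1 := by
        rw [mul_one, ← pow_mul, ← pow_add, Nat.mul_succ, Nat.add_comm]
      have := hJ _ hx
      rw [h1, hφ, hφ1, mul_one] at this
      exact this
  intro x hx
  obtain ⟨n, hxn⟩ := hx
  rcases Nat.eq_zero_or_pos n with rfl | hn
  · have : J = ⊤ := Ideal.eq_top_of_unit_mem J 1 1 (by simpa using hxn) (by simp)
    simp [this]
  · apply key n
    have hle : n ≤ p ^ (e * n) := by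
      calc n ≤ 2 ^ n := Nat.le_of_lt (Nat.lt_two_pow_self (n := n))
        _ ≤ 2 ^ (e * n) := Nat.pow_le_pow_right (by norm_num) (Nat.le_mul_of_pos_left n he)
        _ ≤ p ^ (e * n) := Nat.pow_le_pow_left (Fact.out (p := p.Prime)).two_le _
    have : x ^ p ^ (e * n) = x ^ n * x ^ (p ^ (e * n) - n) := by
      rw [← pow_add, Nat.add_sub_cancel' hle]
    rw [this]
    exact Ideal.mul_mem_right _ _ hxn
end

section
/- Let R be a reduced F-finite commutative ring of prime characteristic p and let c be an element of R. Then the ideal J of R generated by all elements φ(c), where e ranges over integers e ≥ 1 and φ ranges over all p^{-e}-linear maps on R, is uniformly F-compatible: for every integer f ≥ 1 and every p^{-f}-linear map ψ on R, ψ(J) ⊆ J. -/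
/-- An ideal `J` of a ring `R` of characteristic `p` is uniformly F-compatible if
`φ J ⊆ J` for every `e ≥ 1` and every `p^{-e}`-linear map `φ` on `R` (an additive map with
`φ (r^{p^e} * x) = r * φ x`). -/
def UniformlyFCompatible (p : ℕ) {R : Type*} [CommRing R] (J : Ideal R) : Prop :=
  ∀ e : ℕ, 1 ≤ e → ∀ φ : R →+ R, (∀ r x : R, φ (r ^ p ^ e * x) = r * φ x) →
    ∀ x ∈ J, φ x ∈ J

/-- In a reduced F-finite ring `R` of prime characteristic `p`, the ideal generated by all
`φ c`, for `e ≥ 1` and `φ` a `p^{-e}`-linear map, is uniformly F-compatible. -/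
theorem uniformlyFCompatible_span_images (p : ℕ) [Fact p.Prime]
    (R : Type*) [CommRing R] [IsReduced R] [CharP R p]
    (hFfinite : (frobenius R p).Finite) (c : R) :
    UniformlyFCompatible p (Ideal.span {y : R | ∃ e : ℕ, 1 ≤ e ∧
      ∃ φ : R →+ R, (∀ r x : R, φ (r ^ p ^ e * x) = r * φ x) ∧ φ c = y}) := by
  intro f hf ψ hψ x hx
  set S : Set R := {y : R | ∃ e : ℕ, 1 ≤ e ∧
      ∃ φ : R →+ R, (∀ r x : R, φ (r ^ p ^ e * x) = r * φ x) ∧ φ c = y} with hS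
  suffices h : ∀ r : R, ψ (r * x) ∈ Ideal.span S by simpa using h 1
  induction hx using Submodule.span_induction with
  | mem g hg =>
    intro r
    obtain ⟨e, he, φ, hφ, hφc⟩ := hg
    refine Ideal.subset_span ⟨e + f, le_trans he (Nat.le_add_right _ _),
      ψ.comp ((AddMonoidHom.mulLeft r).comp φ), ?_, ?_⟩
    · intro s y
      simp only [AddMonoidHom.comp_apply, AddMonoidHom.coe_mulLeft]
      have h1 : s ^ p ^ (e + f) = (s ^ p ^ f) ^ p ^ e := by
        rw [← pow_mul, ← pow_add, Nat.add_comm]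
      rw [h1, hφ, show r * (s ^ p ^ f * φ y) = s ^ p ^ f * (r * φ y) by ring, hψ]
    · simp [hφc]
  | zero => intro r; simp
  | add a b _ _ ha hb =>
    intro r
    have := (Ideal.span S).add_mem (ha r) (hb r)
    rwa [← ψ.map_add, ← mul_add] at this
  | smul s a _ ha =>
    intro r
    simpa [smul_eq_mul, mul_assoc] using ha (r * s)
end

section
/- Let R be a reduced F-finite commutative ring of prime characteristic p, let τ be a uniformly F-compatible ideal of R, and let J be an ideal of R containing τ whose image J/τ in R/τ is uniformly F-compatible in R/τ (i.e., stable under all p^{-e}-linear maps on R/τ for all e ≥ 1). Then J is uniformly F-compatible in R. -/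
/-- If `τ` is a uniformly F-compatible ideal of a reduced F-finite ring `R` of prime
characteristic `p`, and `J ⊇ τ` is an ideal whose image in `R/τ` is uniformly
F-compatible in `R/τ`, then `J` is uniformly F-compatible in `R`. -/
theorem uniformlyFCompatible_of_quotient (p : ℕ) [Fact p.Prime]
    (R : Type*) [CommRing R] [IsReduced R] [CharP R p]
    (hFfinite : (frobenius R p).Finite)
    (τ J : Ideal R) (hτ : UniformlyFCompatible p τ) (hτJ : τ ≤ J)
    (hquot : UniformlyFCompatible p (J.map (Ideal.Quotient.mk τ))) :
    UniformlyFCompatible p J := by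
  intro e he φ hφ x hx
  -- φ preserves τ, so the composite `mk ∘ φ` kills τ and descends to `ψ : R/τ →+ R/τ`.
  have hker : τ.toAddSubgroup ≤
      ((Ideal.Quotient.mk τ).toAddMonoidHom.comp φ).ker := by
    intro t ht
    simp only [AddMonoidHom.mem_ker, AddMonoidHom.comp_apply, RingHom.toAddMonoidHom_eq_coe,
      AddMonoidHom.coe_coe, Ideal.Quotient.eq_zero_iff_mem]
    exact hτ e he φ hφ t ht
  let ψ : R ⧸ τ →+ R ⧸ τ :=
    QuotientAddGroup.lift τ.toAddSubgroup ((Ideal.Quotient.mk τ).toAddMonoidHom.comp φ) hker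
  have hψmk : ∀ y : R, ψ (Ideal.Quotient.mk τ y) = Ideal.Quotient.mk τ (φ y) := fun y => rfl
  have hψ : ∀ r x : R ⧸ τ, ψ (r ^ p ^ e * x) = r * ψ x := by
    intro r x
    obtain ⟨r, rfl⟩ := Ideal.Quotient.mk_surjective r
    obtain ⟨x, rfl⟩ := Ideal.Quotient.mk_surjective x
    rw [← map_pow, ← map_mul, hψmk, hψmk, hφ, map_mul]
  have hxJ : ψ (Ideal.Quotient.mk τ x) ∈ J.map (Ideal.Quotient.mk τ) :=
    hquot e he ψ hψ _ (Ideal.mem_map_of_mem _ hx)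
  rw [hψmk] at hxJ
  exact (Ideal.mem_quotient_iff_mem hτJ).mp hxJ
end

section
/- Let R be a Frobenius split commutative ring of prime characteristic p and let a be an ideal of R. Then for every integer e ≥ 1, a^{[1/p^e]} ⊆ (a^p)^{[1/p^{e+1}]}, and if a is a principal ideal then a^{[1/p^e]} = (a^p)^{[1/p^{e+1}]}. -/
/-- For an ideal `a` of a ring `R` of characteristic `p` and `e ≥ 1`, `a^{[1/p^e]}` is the
ideal generated by all `φ x` with `x ∈ a` and `φ` a `p^{-e}`-linear map on `R`
(an additive map with `φ (r^{p^e} * z) = r * φ z`). -/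
def invFrobIdeal (p e : ℕ) {R : Type*} [CommRing R] (a : Ideal R) : Ideal R :=
  Ideal.span {y : R | ∃ φ : R →+ R, (∀ r z : R, φ (r ^ p ^ e * z) = r * φ z) ∧
    ∃ x ∈ a, φ x = y}

/-- In a Frobenius split ring `R` of prime characteristic `p`, for every ideal `a` and
every `e ≥ 1` we have `a^{[1/p^e]} ⊆ (a^p)^{[1/p^{e+1}]}`, with equality when `a` is
principal. -/
theorem invFrobIdeal_mono_of_frobeniusSplit (p : ℕ) [Fact p.Prime]
    (R : Type*) [CommRing R] [CharP R p] (hsplit : FrobeniusSplit p R)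
    (a : Ideal R) (e : ℕ) (he : 1 ≤ e) :
    invFrobIdeal p e a ≤ invFrobIdeal p (e + 1) (a ^ p) ∧
    ((∃ f : R, a = Ideal.span {f}) →
      invFrobIdeal p e a = invFrobIdeal p (e + 1) (a ^ p)) := by
  obtain ⟨σ, hσ, hσ1⟩ := hsplit
  have hle : invFrobIdeal p e a ≤ invFrobIdeal p (e + 1) (a ^ p) := by
    rw [invFrobIdeal, Ideal.span_le]
    rintro y ⟨φ, hφ, x, hx, rfl⟩
    apply Ideal.subset_span
    refine ⟨φ.comp σ, ?_, x ^ p, Ideal.pow_mem_pow hx p, ?_⟩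
    · intro r z
      simp only [AddMonoidHom.comp_apply]
      rw [pow_succ, pow_mul, hσ, hφ]
    · simp only [AddMonoidHom.comp_apply]
      have hx' : σ (x ^ p) = x := by
        have := hσ x 1
        rwa [mul_one, hσ1, mul_one] at this
      rw [hx']
  refine ⟨hle, ?_⟩
  rintro ⟨f, rfl⟩
  refine le_antisymm hle ?_
  rw [invFrobIdeal, Ideal.span_le]
  rintro y ⟨ψ, hψ, x, hx, rfl⟩
  rw [Ideal.span_singleton_pow, Ideal.mem_span_singleton] at hx
  obtain ⟨c, hc⟩ := hx
  apply Ideal.subset_span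
  refine ⟨{ toFun := fun z => ψ (c * z ^ p),
            map_zero' := by
              simp [zero_pow (Nat.Prime.ne_zero (Fact.out (p := p.Prime)))],
            map_add' := fun z w => by
              show ψ (c * (z + w) ^ p) = ψ (c * z ^ p) + ψ (c * w ^ p)
              rw [add_pow_char, mul_add, map_add] }, ?_, f,
    Ideal.mem_span_singleton_self f, ?_⟩
  · intro r z
    simp only [AddMonoidHom.coe_mk, ZeroHom.coe_mk]
    have h1 : c * (r ^ p ^ e * z) ^ p = r ^ p ^ (e + 1) * (c * z ^ p) := by
      rw [mul_pow, ← pow_mul, ← pow_succ]; ring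
    rw [h1, hψ]
  · simp only [AddMonoidHom.coe_mk, ZeroHom.coe_mk]
    rw [mul_comm, ← hc]
end
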